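/- Let S ⊆ {1,…,M} be nonempty and suppose λ* > 0 satisfies Σ_{m∈S} f_m·max(0, P^KKT_{h_m}(λ*)) = P̄. Then the vector defined by P*_m = max(0, P^KKT_{h_m}(λ*)) for m ∈ S is an optimal solution of problem DP2^(s) with support set S, i.e. it maximizes Σ_{m∈S} f_m·R_{h_m}(P_m) over all (P_m)_{m∈S} with P_m ≥ 0 and Σ_{m∈S} f_m·P_m ≤ P̄. -/
import Mathlib


open scoped BigOperators Classical
open Finset

noncomputable section

/-- Euclidean inner product on `Fin L → ℝ`. -/
def ip {L : ℕ} (x y : Fin L → ℝ) : ℝ := ∑ i, x i * y i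

/-- Squared Euclidean norm on `Fin L → ℝ`. -/
def nsq {L : ℕ} (x : Fin L → ℝ) : ℝ := ∑ i, (x i) ^ 2

/-- ε(h) = ‖h‖²‖a‖² − ⟨h,a⟩². -/
def eps {L : ℕ} (a h : Fin L → ℝ) : ℝ := nsq h * nsq a - (ip h a) ^ 2

/-- Symmetric-policy computation rate R_h(P). -/
def Rsym {L : ℕ} (a h : Fin L → ℝ) (P : ℝ) : ℝ :=
  (1 / 2) * Real.logb 2 ((1 + P * nsq h) / (nsq a + P * eps a h))

/-- The vector √p∘h with entries √(p_l)·h_l. -/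
def sqp {L : ℕ} (p h : Fin L → ℝ) : Fin L → ℝ := fun l => Real.sqrt (p l) * h l

/-- Asymmetric-policy computation rate R(h,p). -/
def Rasym {L : ℕ} (a h p : Fin L → ℝ) : ℝ :=
  (1 / 2) * Real.logb 2 ((1 + nsq (sqp p h)) /
    (nsq a + (nsq (sqp p h) * nsq a - (ip (sqp p h) a) ^ 2)))

/-- The KKT water-filling-type solution P^KKT_h(λ). -/
def PKKT {L : ℕ} (a h : Fin L → ℝ) (lam : ℝ) : ℝ :=
  if ∃ t : ℝ, h = t • a then 1 / lam - 1 / nsq h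
  else (-(2 * nsq h * nsq a - (ip h a) ^ 2) +
      Real.sqrt ((2 * nsq h * nsq a - (ip h a) ^ 2) ^ 2 -
        4 * (nsq h * eps a h) * (nsq a - (ip h a) ^ 2 / lam))) /
    (2 * (nsq h * eps a h))

/-! ### Auxiliary lemmas -/

lemma nsq_nonneg' {L : ℕ} (x : Fin L → ℝ) : 0 ≤ nsq x :=
  Finset.sum_nonneg fun _ _ => sq_nonneg _

lemma nsq_pos' {L : ℕ} {x : Fin L → ℝ} (hx : x ≠ 0) : 0 < nsq x := by
  obtain ⟨i, hi⟩ : ∃ i, x i ≠ 0 := by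
    by_contra hc; push_neg at hc; exact hx (funext hc)
  have h1 : (x i) ^ 2 ≤ nsq x :=
    Finset.single_le_sum (fun j _ => sq_nonneg (x j)) (Finset.mem_univ i)
  have : (0:ℝ) < (x i) ^ 2 := by positivity
  linarith

lemma eps_nonneg' {L : ℕ} (a h : Fin L → ℝ) : 0 ≤ eps a h := by
  have := Finset.sum_mul_sq_le_sq_mul_sq Finset.univ h a
  unfold eps nsq ip
  linarith [this]

lemma eps_eq_zero_collinear' {L : ℕ} {a h : Fin L → ℝ} (ha : a ≠ 0)
    (he : eps a h = 0) : ∃ t : ℝ, h = t • a := by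
  have hA : 0 < nsq a := nsq_pos' ha
  set t : ℝ := ip h a / nsq a with ht
  refine ⟨t, ?_⟩
  have expand : nsq (h - t • a) = nsq h - 2 * t * ip h a + t ^ 2 * nsq a := by
    unfold nsq ip
    rw [Finset.mul_sum, Finset.mul_sum, ← Finset.sum_sub_distrib, ← Finset.sum_add_distrib]
    apply Finset.sum_congr rfl; intro i _
    simp only [Pi.sub_apply, Pi.smul_apply, smul_eq_mul]; ring
  have hz : nsq (h - t • a) = 0 := by
    rw [expand, ht]
    have hc2 : (ip h a) ^ 2 = nsq h * nsq a := by unfold eps at he; linarith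
    field_simp
    nlinarith [hc2]
  have hzero : ∀ i ∈ Finset.univ, ((h - t • a) i) ^ 2 = 0 := by
    rw [← Finset.sum_eq_zero_iff_of_nonneg (fun i _ => sq_nonneg _)]
    exact hz
  funext i
  have h0 : (h - t • a) i = 0 := sq_eq_zero_iff.mp (hzero i (Finset.mem_univ i))
  simpa [sub_eq_zero, Pi.sub_apply, Pi.smul_apply, smul_eq_mul] using h0

lemma ip_smul' {L : ℕ} (a : Fin L → ℝ) (t : ℝ) : ip (t • a) a = t * nsq a := by
  unfold ip nsq; rw [Finset.mul_sum]; apply Finset.sum_congr rfl; intro i _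
  simp [smul_eq_mul]; ring

lemma nsq_smul' {L : ℕ} (a : Fin L → ℝ) (t : ℝ) : nsq (t • a) = t ^ 2 * nsq a := by
  unfold nsq; rw [Finset.mul_sum]; apply Finset.sum_congr rfl; intro i _
  simp [smul_eq_mul]; ring

/-- Abstract quadratic-root algebra used for the non-collinear KKT point. -/
lemma alg_quadratic (b d g lam A c2 P s : ℝ) (hd : d ≠ 0)
    (hs2 : s ^ 2 = b ^ 2 - 4 * d * g) (hg : lam * g = lam * A - c2)
    (hP : P = (-b + s) / (2 * d)) :
    lam * (A + b * P + d * P ^ 2) = c2 := by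
  have h2 : 2 * d * P = -b + s := by rw [hP]; field_simp
  have hs3 : (2 * d * P + b) ^ 2 = b ^ 2 - 4 * d * g := by
    have hsv : 2 * d * P + b = s := by linarith
    rw [hsv, hs2]
  have hq : 4 * d * (d * P ^ 2 + b * P + g) = 0 := by linear_combination hs3
  have hq2 : d * P ^ 2 + b * P + g = 0 := by
    rcases mul_eq_zero.mp hq with h1 | h1
    · exact absurd (by linarith : d = 0) hd
    · exact h1
  linear_combination lam * hq2 - hg

/-- KKT characterization of the clipped water-filling point. -/
lemma keyKKT {L : ℕ} {a h : Fin L → ℝ} (ha : a ≠ 0) (hh : h ≠ 0) {lam : ℝ}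
    (hlam : 0 < lam) :
    (0 < PKKT a h lam →
      (ip h a) ^ 2 = lam * ((1 + PKKT a h lam * nsq h) * (nsq a + PKKT a h lam * eps a h))) ∧
    (PKKT a h lam ≤ 0 → (ip h a) ^ 2 ≤ lam * nsq a) := by
  have hA : 0 < nsq a := nsq_pos' ha
  have hn : 0 < nsq h := nsq_pos' hh
  by_cases hcol : ∃ t : ℝ, h = t • a
  · obtain ⟨t, rfl⟩ := hcol
    have ht : t ≠ 0 := by rintro rfl; simp at hh
    have hP : PKKT a (t • a) lam = 1 / lam - 1 / nsq (t • a) := by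
      rw [PKKT, if_pos ⟨t, rfl⟩]
    have he : eps a (t • a) = 0 := by
      unfold eps; rw [ip_smul', nsq_smul']; ring
    rw [hP, he, ip_smul', nsq_smul']
    constructor
    · intro hpos
      field_simp
      ring
    · intro hle
      have h1 : 1 / lam ≤ 1 / (t ^ 2 * nsq a) := by linarith
      have h2 : t ^ 2 * nsq a ≤ lam := by
        have htA : 0 < t ^ 2 * nsq a := by positivity
        rw [div_le_div_iff₀ hlam htA] at h1; linarith
      nlinarith
  · have he : 0 < eps a h := by
      rcases lt_or_eq_of_le (eps_nonneg' a h) with h1 | h1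
      · exact h1
      · exact absurd (eps_eq_zero_collinear' ha h1.symm) hcol
    have hedef : eps a h = nsq h * nsq a - (ip h a) ^ 2 := rfl
    have hd : 0 < nsq h * eps a h := by positivity
    have hP : PKKT a h lam = (-(2 * nsq h * nsq a - (ip h a) ^ 2) +
        Real.sqrt ((2 * nsq h * nsq a - (ip h a) ^ 2) ^ 2 -
          4 * (nsq h * eps a h) * (nsq a - (ip h a) ^ 2 / lam))) /
        (2 * (nsq h * eps a h)) := by
      rw [PKKT, if_neg hcol]
    have hb : 0 < 2 * nsq h * nsq a - (ip h a) ^ 2 := by nlinarith [he, hedef]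
    constructor
    · intro hpos
      rw [hP] at hpos
      have hnum : 0 < -(2 * nsq h * nsq a - (ip h a) ^ 2) +
          Real.sqrt ((2 * nsq h * nsq a - (ip h a) ^ 2) ^ 2 -
            4 * (nsq h * eps a h) * (nsq a - (ip h a) ^ 2 / lam)) := by
        by_contra hc; push_neg at hc
        have : (-(2 * nsq h * nsq a - (ip h a) ^ 2) +
            Real.sqrt ((2 * nsq h * nsq a - (ip h a) ^ 2) ^ 2 -
              4 * (nsq h * eps a h) * (nsq a - (ip h a) ^ 2 / lam))) /
            (2 * (nsq h * eps a h)) ≤ 0 :=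
          div_nonpos_of_nonpos_of_nonneg hc (by positivity)
        linarith
      have hsgt : 2 * nsq h * nsq a - (ip h a) ^ 2 <
          Real.sqrt ((2 * nsq h * nsq a - (ip h a) ^ 2) ^ 2 -
            4 * (nsq h * eps a h) * (nsq a - (ip h a) ^ 2 / lam)) := by linarith
      have hdisc : 0 < (2 * nsq h * nsq a - (ip h a) ^ 2) ^ 2 -
          4 * (nsq h * eps a h) * (nsq a - (ip h a) ^ 2 / lam) :=
        Real.sqrt_pos.mp (lt_trans hb hsgt)
      have hs2 := Real.sq_sqrt hdisc.le
      have halg := alg_quadratic (2 * nsq h * nsq a - (ip h a) ^ 2) (nsq h * eps a h)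
        (nsq a - (ip h a) ^ 2 / lam) lam (nsq a) ((ip h a) ^ 2) (PKKT a h lam)
        (Real.sqrt ((2 * nsq h * nsq a - (ip h a) ^ 2) ^ 2 -
          4 * (nsq h * eps a h) * (nsq a - (ip h a) ^ 2 / lam)))
        hd.ne' hs2 (by field_simp) hP
      rw [hedef] at halg ⊢
      linear_combination -halg
    · intro hle
      rw [hP] at hle
      by_contra hc
      push_neg at hc
      have hcc : nsq a - (ip h a) ^ 2 / lam < 0 := by
        rw [sub_neg, lt_div_iff₀ hlam]; linarith
      have hdiscb : (2 * nsq h * nsq a - (ip h a) ^ 2) ^ 2 <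
          (2 * nsq h * nsq a - (ip h a) ^ 2) ^ 2 -
            4 * (nsq h * eps a h) * (nsq a - (ip h a) ^ 2 / lam) := by nlinarith
      have hs : 2 * nsq h * nsq a - (ip h a) ^ 2 <
          Real.sqrt ((2 * nsq h * nsq a - (ip h a) ^ 2) ^ 2 -
            4 * (nsq h * eps a h) * (nsq a - (ip h a) ^ 2 / lam)) :=
        (Real.lt_sqrt hb.le).mpr hdiscb
      have : 0 < (-(2 * nsq h * nsq a - (ip h a) ^ 2) +
          Real.sqrt ((2 * nsq h * nsq a - (ip h a) ^ 2) ^ 2 -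
            4 * (nsq h * eps a h) * (nsq a - (ip h a) ^ 2 / lam))) /
          (2 * (nsq h * eps a h)) :=
        div_pos (by linarith) (by positivity)
      linarith

lemma Rsym_eq_log {L : ℕ} {a h : Fin L → ℝ} (ha : a ≠ 0) (hh : h ≠ 0) {P : ℝ}
    (hP : 0 ≤ P) :
    Rsym a h P = (Real.log (1 + P * nsq h) - Real.log (nsq a + P * eps a h)) /
      (2 * Real.log 2) := by
  have h1 : (0:ℝ) < 1 + P * nsq h := by
    have := nsq_pos' hh; nlinarith
  have h2 : (0:ℝ) < nsq a + P * eps a h := by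
    have := nsq_pos' ha; nlinarith [eps_nonneg' a h, mul_nonneg hP (eps_nonneg' a h)]
  rw [Rsym, Real.logb, Real.log_div h1.ne' h2.ne']
  ring

/-- The per-state tangent-line (concavity) inequality at the clipped KKT point. -/
lemma per_term {L : ℕ} {a h : Fin L → ℝ} (ha : a ≠ 0) (hh : h ≠ 0) {lam : ℝ}
    (hlam : 0 < lam) {Q : ℝ} (hQ : 0 ≤ Q) :
    Rsym a h Q ≤ Rsym a h (max 0 (PKKT a h lam)) +
      lam / (2 * Real.log 2) * (Q - max 0 (PKKT a h lam)) := by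
  set P := max 0 (PKKT a h lam) with hPdef
  have hP0 : 0 ≤ P := le_max_left _ _
  have hn : 0 < nsq h := nsq_pos' hh
  have hA : 0 < nsq a := nsq_pos' ha
  have he : 0 ≤ eps a h := eps_nonneg' a h
  have hX1 : (0:ℝ) < 1 + Q * nsq h := by nlinarith
  have hY1 : (0:ℝ) < nsq a + Q * eps a h := by nlinarith [mul_nonneg hQ he]
  have hX2 : (0:ℝ) < 1 + P * nsq h := by nlinarith
  have hY2 : (0:ℝ) < nsq a + P * eps a h := by nlinarith [mul_nonneg hP0 he]
  have hkey : (Q - P) * (ip h a) ^ 2 ≤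
      lam * (Q - P) * ((1 + P * nsq h) * (nsq a + Q * eps a h)) := by
    rcases le_or_gt (PKKT a h lam) 0 with hle | hlt
    · have hPz : P = 0 := max_eq_left hle
      have h2 := (keyKKT ha hh hlam).2 hle
      rw [hPz]
      have hedef : eps a h = nsq h * nsq a - (ip h a) ^ 2 := rfl
      nlinarith [mul_le_mul_of_nonneg_left h2 hQ,
        mul_nonneg (mul_nonneg hlam.le hQ) (mul_nonneg hQ he), sq_nonneg (ip h a)]
    · have hPe : P = PKKT a h lam := max_eq_right hlt.le
      have h1 := (keyKKT ha hh hlam).1 hlt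
      rw [← hPe] at h1
      nlinarith [mul_nonneg (mul_nonneg hlam.le hX2.le)
        (mul_nonneg he (sq_nonneg (Q - P)))]
  have hlogle : Real.log (1 + Q * nsq h) - Real.log (nsq a + Q * eps a h) -
      (Real.log (1 + P * nsq h) - Real.log (nsq a + P * eps a h)) ≤ lam * (Q - P) := by
    have hfrac : (0:ℝ) < ((1 + Q * nsq h) * (nsq a + P * eps a h)) /
        ((1 + P * nsq h) * (nsq a + Q * eps a h)) := by positivity
    have hlog1 : Real.log (1 + Q * nsq h) - Real.log (nsq a + Q * eps a h) -
        (Real.log (1 + P * nsq h) - Real.log (nsq a + P * eps a h)) =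
        Real.log (((1 + Q * nsq h) * (nsq a + P * eps a h)) /
          ((1 + P * nsq h) * (nsq a + Q * eps a h))) := by
      rw [Real.log_div (by positivity) (by positivity),
        Real.log_mul hX1.ne' hY2.ne', Real.log_mul hX2.ne' hY1.ne']
      ring
    have hlog2 := Real.log_le_sub_one_of_pos hfrac
    have hsub : ((1 + Q * nsq h) * (nsq a + P * eps a h)) /
        ((1 + P * nsq h) * (nsq a + Q * eps a h)) - 1 =
        ((Q - P) * (ip h a) ^ 2) / ((1 + P * nsq h) * (nsq a + Q * eps a h)) := by
      rw [div_sub_one (by positivity)]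
      congr 1
      have hedef : eps a h = nsq h * nsq a - (ip h a) ^ 2 := rfl
      rw [hedef]; ring
    have hdiv : ((Q - P) * (ip h a) ^ 2) / ((1 + P * nsq h) * (nsq a + Q * eps a h)) ≤
        lam * (Q - P) := by
      rw [div_le_iff₀ (by positivity)]
      nlinarith [hkey]
    rw [hlog1]
    calc Real.log _ ≤ _ := hlog2
    _ = _ := hsub
    _ ≤ _ := hdiv
  have hlog2pos : 0 < Real.log 2 := Real.log_pos one_lt_two
  rw [Rsym_eq_log ha hh hQ, Rsym_eq_log ha hh hP0]
  rw [div_add' _ _ _ (by positivity : (2 * Real.log 2) ≠ 0)]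
  rw [div_le_div_iff_of_pos_right (by positivity)]
  have hcancel : lam / (2 * Real.log 2) * (Q - P) * (2 * Real.log 2) = lam * (Q - P) := by
    field_simp
  linarith [hlogle, hcancel.le, hcancel.ge]

/-- if λ* > 0 satisfies the total-power equation, then the clipped KKT
solution P*_m = max(0, P^KKT_{h_m}(λ*)) is optimal for DP2^(s) with support set S. -/
theorem stmt4 {L M : ℕ} (hL : 1 ≤ L)
    (a : Fin L → ℝ) (ha : a ≠ 0) (haint : ∀ i, ∃ n : ℤ, a i = (n : ℝ))
    (h : Fin M → Fin L → ℝ) (hh : ∀ m, h m ≠ 0)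
    (f : Fin M → ℝ) (hf : ∀ m, 0 < f m) (hfsum : ∑ m, f m = 1)
    (Pbar : ℝ) (hPbar : 0 < Pbar)
    (S : Finset (Fin M)) (hS : S.Nonempty)
    (lam : ℝ) (hlam : 0 < lam)
    (hsum : ∑ m ∈ S, f m * max 0 (PKKT a (h m) lam) = Pbar) :
    -- the clipped KKT point is feasible for DP2^(s) with support S
    ((∀ m ∈ S, 0 ≤ max 0 (PKKT a (h m) lam)) ∧
      ∑ m ∈ S, f m * max 0 (PKKT a (h m) lam) ≤ Pbar) ∧
    -- and it is optimal for DP2^(s) with support S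
    (∀ Q : Fin M → ℝ, (∀ m ∈ S, 0 ≤ Q m) → ∑ m ∈ S, f m * Q m ≤ Pbar →
      ∑ m ∈ S, f m * Rsym a (h m) (Q m)
        ≤ ∑ m ∈ S, f m * Rsym a (h m) (max 0 (PKKT a (h m) lam))) := by
  refine ⟨⟨fun m _ => le_max_left _ _, le_of_eq hsum⟩, ?_⟩
  intro Q hQ0 hQsum
  have hlog2 : 0 < Real.log 2 := Real.log_pos one_lt_two
  have hk : 0 ≤ lam / (2 * Real.log 2) := by positivity
  calc ∑ m ∈ S, f m * Rsym a (h m) (Q m)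
      ≤ ∑ m ∈ S, f m * (Rsym a (h m) (max 0 (PKKT a (h m) lam)) +
          lam / (2 * Real.log 2) * (Q m - max 0 (PKKT a (h m) lam))) := by
        apply Finset.sum_le_sum
        intro m hm
        exact mul_le_mul_of_nonneg_left (per_term ha (hh m) hlam (hQ0 m hm)) (hf m).le
    _ = ∑ m ∈ S, f m * Rsym a (h m) (max 0 (PKKT a (h m) lam)) +
          lam / (2 * Real.log 2) *
            ((∑ m ∈ S, f m * Q m) - ∑ m ∈ S, f m * max 0 (PKKT a (h m) lam)) := by
        simp only [mul_add]
        rw [Finset.sum_add_distrib, mul_sub, Finset.mul_sum, Finset.mul_sum,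
          ← Finset.sum_sub_distrib]
        congr 1
        apply Finset.sum_congr rfl
        intro m _
        ring
    _ ≤ ∑ m ∈ S, f m * Rsym a (h m) (max 0 (PKKT a (h m) lam)) := by
        have hD : (∑ m ∈ S, f m * Q m) - ∑ m ∈ S, f m * max 0 (PKKT a (h m) lam) ≤ 0 := by
          rw [hsum]; linarith
        nlinarith [mul_nonneg hk (neg_nonneg.mpr hD)]
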